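/- arXiv:2001.01159 — 8 statements merged into one kernel-verified Lean document; each statement's English description precedes it below -/
import Mathlib

section
/- Let X and Y be random variables taking values in finite alphabets 𝒳 and 𝒴 with joint distribution P_{X,Y}, and let P_e denote the minimum probability of error in estimating X from Y, i.e., P_e = 1 − Σ_{y∈𝒴} max_{x∈𝒳} P_{X,Y}(x,y). Then for every α ∈ [0,1] and every θ ≥ 1, P_e ≥ (1 − α) · P_{X,Y}{ (x,y) ∈ 𝒳 × 𝒴 : P^{(θ)}_{X|Y}(x|y) ≤ α }. -/
/-!
For a column `p = P(·, y)` with mode `x₀`, tilting with `θ ≥ 1` can only increase the relative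
weight of the mode, since `∑ p u ^ θ ≤ (p x₀) ^ (θ - 1) ∑ p u`. So if the mode lies in the set
`{x : P^{(θ)}(x|y) ≤ α}` then `p x₀ ≤ α ∑ p`, and otherwise that set misses the mode; in both
cases `(1 - α)` times the mass of the set is at most `∑ p - p x₀`. Summing over `y` gives the
bound, since `P_e = ∑_y (∑_x P(x, y) - max_x P(x, y))`.
-/

open scoped Classical

noncomputable def tilted {ι : Type*} [Fintype ι] (p : ι → ℝ) (θ : ℝ) (x : ι) : ℝ :=
  p x ^ θ / ∑ u, p u ^ θ

lemma rpow_le_rpow_sub_one_mul {a b θ : ℝ} (ha : 0 ≤ a) (hab : a ≤ b) (hθ : 1 ≤ θ) :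
    a ^ θ ≤ b ^ (θ - 1) * a := by
  calc a ^ θ = a ^ (θ - 1) * a := by
        rw [← Real.rpow_add_one' ha (by linarith), sub_add_cancel]
    _ ≤ b ^ (θ - 1) * a := by gcongr

section

variable {ι : Type*} [Fintype ι]

lemma div_sum_le_tilted_of_forall_le {p : ι → ℝ} (hp : ∀ x, 0 ≤ p x) {θ : ℝ} (hθ : 1 ≤ θ)
    {x₀ : ι} (hmax : ∀ x, p x ≤ p x₀) : p x₀ / ∑ x, p x ≤ tilted p θ x₀ := by
  rcases (hp x₀).eq_or_lt with h0 | hpos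
  · rw [← h0, zero_div]
    exact div_nonneg (Real.rpow_nonneg (hp x₀) θ)
      (Finset.sum_nonneg fun u _ => Real.rpow_nonneg (hp u) θ)
  have hsum_pos : 0 < ∑ x, p x :=
    hpos.trans_le (Finset.single_le_sum (fun u _ => hp u) (Finset.mem_univ x₀))
  have hsum_rpow_pos : 0 < ∑ u, p u ^ θ :=
    (Real.rpow_pos_of_pos hpos θ).trans_le
      (Finset.single_le_sum (f := fun u => p u ^ θ) (fun u _ => Real.rpow_nonneg (hp u) θ)
        (Finset.mem_univ x₀))
  rw [tilted, div_le_div_iff₀ hsum_pos hsum_rpow_pos]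
  calc p x₀ * ∑ u, p u ^ θ ≤ p x₀ * ∑ u, p x₀ ^ (θ - 1) * p u := by
        gcongr with u; exact rpow_le_rpow_sub_one_mul (hp u) (hmax u) hθ
    _ = p x₀ ^ θ * ∑ x, p x := by
        rw [← Finset.mul_sum, ← mul_assoc, mul_comm (p x₀), ← Real.rpow_add_one hpos.ne',
          sub_add_cancel]

lemma one_sub_mul_sum_tilted_le_sub_sup' [Nonempty ι] {p : ι → ℝ} (hp : ∀ x, 0 ≤ p x)
    {α θ : ℝ} (hα₀ : 0 ≤ α) (hα₁ : α ≤ 1) (hθ : 1 ≤ θ) :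
    (1 - α) * ∑ x ∈ Finset.univ.filter
        (fun x => tilted (fun u => p u / ∑ v, p v) θ x ≤ α), p x ≤
      ∑ x, p x - Finset.univ.sup' Finset.univ_nonempty p := by
  set T := ∑ x, p x
  set A := Finset.univ.filter (fun x => tilted (fun u => p u / T) θ x ≤ α)
  obtain ⟨x₀, -, hx₀⟩ := Finset.exists_mem_eq_sup' Finset.univ_nonempty p
  have hmax : ∀ x, p x ≤ p x₀ := fun x => hx₀ ▸ Finset.le_sup' p (Finset.mem_univ x)
  have hx₀T : p x₀ ≤ T := Finset.single_le_sum (fun u _ => hp u) (Finset.mem_univ x₀)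
  have hT : 0 ≤ T := (hp x₀).trans hx₀T
  have hA : 0 ≤ ∑ x ∈ A, p x := Finset.sum_nonneg fun x _ => hp x
  rw [hx₀]
  by_cases hx₀A : x₀ ∈ A
  · have hmode : p x₀ ≤ α * T := by
      rcases hT.eq_or_lt with hT0 | hTpos
      · rw [← hT0, mul_zero]; exact hT0 ▸ hx₀T
      have hq : (p x₀ / T) / ∑ u, p u / T ≤ α :=
        (div_sum_le_tilted_of_forall_le (fun u => div_nonneg (hp u) hT) hθ
          fun x => div_le_div_of_nonneg_right (hmax x) hT).trans (Finset.mem_filter.mp hx₀A).2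
      rwa [← Finset.sum_div, div_self hTpos.ne', div_one, div_le_iff₀ hTpos] at hq
    have hAT : ∑ x ∈ A, p x ≤ T :=
      Finset.sum_le_sum_of_subset_of_nonneg (Finset.subset_univ A) fun x _ _ => hp x
    nlinarith
  · have hAT : ∑ x ∈ A, p x ≤ T - p x₀ := by
      rw [← Finset.sum_erase_eq_sub (Finset.mem_univ x₀)]
      refine Finset.sum_le_sum_of_subset_of_nonneg (fun x hx => ?_) fun x _ _ => hp x
      exact Finset.mem_erase.mpr ⟨fun h => hx₀A (h ▸ hx), Finset.mem_univ x⟩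
    nlinarith

end

/-- **Generalized Poor–Verdú bound.**
`X`, `Y` are random variables on finite alphabets `𝒳`, `𝒴` with joint distribution `P`.
The minimum probability of error `P_e = 1 - ∑_y max_x P(x,y)` satisfies, for every
`α ∈ [0,1]` and `θ ≥ 1`,
`P_e ≥ (1 - α) · P_{X,Y}{(x,y) : P^{(θ)}_{X|Y}(x|y) ≤ α}`, where the tilted posterior is
`P^{(θ)}_{X|Y}(x|y) = P_{X|Y}(x|y)^θ / ∑_{u ∈ 𝒳} P_{X|Y}(u|y)^θ` and
`P_{X|Y}(x|y) = P(x,y) / ∑_v P(v,y)`. -/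
theorem stmt_0 {𝒳 𝒴 : Type*} [Fintype 𝒳] [Fintype 𝒴] [Nonempty 𝒳]
    (P : 𝒳 → 𝒴 → ℝ) (hP : ∀ x y, 0 ≤ P x y)
    (hsum : ∑ x, ∑ y, P x y = 1)
    (α θ : ℝ) (hα : α ∈ Set.Icc (0 : ℝ) 1) (hθ : 1 ≤ θ) :
    1 - ∑ y, Finset.univ.sup' Finset.univ_nonempty (fun x => P x y) ≥
      (1 - α) *
        ∑ q ∈ Finset.univ.filter (fun q : 𝒳 × 𝒴 =>
            (P q.1 q.2 / ∑ v, P v q.2) ^ θ /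
              (∑ u, (P u q.2 / ∑ v, P v q.2) ^ θ) ≤ α),
          P q.1 q.2 := by
  calc (1 - α) * ∑ q ∈ Finset.univ.filter (fun q : 𝒳 × 𝒴 =>
            tilted (fun u => P u q.2 / ∑ v, P v q.2) θ q.1 ≤ α), P q.1 q.2
      = ∑ y, (1 - α) * ∑ x ∈ Finset.univ.filter
          (fun x => tilted (fun u => P u y / ∑ v, P v y) θ x ≤ α), P x y := by
        simp only [Finset.sum_filter, Fintype.sum_prod_type_right, Finset.mul_sum]
    _ ≤ ∑ y, (∑ x, P x y - Finset.univ.sup' Finset.univ_nonempty (fun x => P x y)) :=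
        Finset.sum_le_sum fun y _ =>
          one_sub_mul_sum_tilted_le_sub_sup' (fun x => hP x y) hα.1 hα.2 hθ
    _ = 1 - ∑ y, Finset.univ.sup' Finset.univ_nonempty (fun x => P x y) := by
        rw [Finset.sum_sub_distrib, Finset.sum_comm, hsum]
end

section
/- Let X and Y be random variables on finite alphabets 𝒳 and 𝒴 with joint distribution P_{X,Y}. The lower bound P_{X,Y}{ (x,y) : P_{X|Y}(x|y) < max_{u∈𝒳} P_{X|Y}(u|y) } equals the minimum probability of error P_e if and only if for every y ∈ 𝒴 with P_Y(y) > 0 the maximizer of x ↦ P_{X|Y}(x|y) is unique. -/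
/-!
Dividing by `P_Y(y) > 0` does not change the maximizers of `x ↦ P(x,y)`, so the bound is
`∑_y ∑_{x not a maximizer} P(x,y) = ∑_y (P_Y(y) - n_y M_y)`, where `M_y = max_x P(x,y)` and
`n_y ≥ 1` is the number of maximizers. As `∑_y P_Y(y) = 1`, it falls short of `P_e` by
`∑_y (n_y - 1) M_y`, a sum of non-negative terms; it vanishes iff `n_y = 1` whenever `M_y > 0`,
i.e. whenever `P_Y(y) > 0`.
-/

open Finset

section Maximizers

variable {ι : Type*} [Fintype ι] [Nonempty ι] {f : ι → ℝ}

lemma eq_sup'_iff_forall_le {x : ι} :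
    f x = univ.sup' univ_nonempty f ↔ ∀ u, f u ≤ f x := by
  rw [le_antisymm_iff, and_iff_right (le_sup' f (mem_univ x)), sup'_le_iff]
  simp only [mem_univ, true_implies]

lemma sup'_pos_iff_sum_pos (hf : ∀ x, 0 ≤ f x) :
    0 < univ.sup' univ_nonempty f ↔ 0 < ∑ x, f x := by
  constructor
  · intro h
    obtain ⟨x, -, hx⟩ := exists_mem_eq_sup' univ_nonempty f
    exact (hx ▸ h).trans_le (single_le_sum (fun i _ => hf i) (mem_univ x))
  · intro h
    obtain ⟨x, -, hx⟩ := exists_ne_zero_of_sum_ne_zero h.ne'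
    exact ((hf x).lt_of_ne' hx).trans_le (le_sup' f (mem_univ x))

lemma sup'_univ_nonneg (hf : ∀ x, 0 ≤ f x) : 0 ≤ univ.sup' univ_nonempty f :=
  le_sup'_of_le f (mem_univ (Classical.arbitrary ι)) (hf _)

lemma sum_filter_lt_sup' :
    ∑ x ∈ univ.filter (fun x => f x < univ.sup' univ_nonempty f), f x
      = ∑ x, f x - #(univ.filter (fun x => f x = univ.sup' univ_nonempty f))
          * univ.sup' univ_nonempty f := by
  set M := univ.sup' univ_nonempty f
  have h_lt : univ.filter (fun x => f x < M) = univ.filter (fun x => ¬ f x = M) :=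
    filter_congr fun x _ => (le_sup' f (mem_univ x)).lt_iff_ne
  rw [h_lt, ← sum_filter_add_sum_filter_not univ (fun x => f x = M) f,
    sum_congr rfl fun x hx => (mem_filter.mp hx).2, sum_const, nsmul_eq_mul]
  ring

lemma one_le_card_filter_eq_sup' :
    1 ≤ #(univ.filter (fun x => f x = univ.sup' univ_nonempty f)) := by
  obtain ⟨x, -, hx⟩ := exists_mem_eq_sup' univ_nonempty f
  exact card_pos.mpr ⟨x, mem_filter.mpr ⟨mem_univ x, hx.symm⟩⟩

theorem sum_filter_lt_sup'_le (hf : ∀ x, 0 ≤ f x) :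
    ∑ x ∈ univ.filter (fun x => f x < univ.sup' univ_nonempty f), f x
      ≤ ∑ x, f x - univ.sup' univ_nonempty f := by
  have hM := sup'_univ_nonneg hf
  have hn : (1 : ℝ) ≤ #(univ.filter (fun x => f x = univ.sup' univ_nonempty f)) := by
    exact_mod_cast one_le_card_filter_eq_sup'
  rw [sum_filter_lt_sup']
  nlinarith

theorem sum_filter_lt_sup'_eq_iff (hf : ∀ x, 0 ≤ f x) :
    ∑ x ∈ univ.filter (fun x => f x < univ.sup' univ_nonempty f), f x
        = ∑ x, f x - univ.sup' univ_nonempty f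
      ↔ (0 < ∑ x, f x → ∃! x, ∀ u, f u ≤ f x) := by
  have hM := sup'_univ_nonneg hf
  simp only [← eq_sup'_iff_forall_le]
  rw [sum_filter_lt_sup', sub_right_inj, mul_left_eq_self₀, Nat.cast_eq_one,
    ← sup'_pos_iff_sum_pos hf, hM.lt_iff_ne', or_iff_not_imp_right,
    Fintype.existsUnique_iff_card_one]

lemma sum_filter_div_sum_lt_sup' (hf : ∀ x, 0 ≤ f x) :
    ∑ x ∈ univ.filter (fun x =>
        f x / ∑ v, f v < univ.sup' univ_nonempty fun u => f u / ∑ v, f v), f x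
      = ∑ x ∈ univ.filter (fun x => f x < univ.sup' univ_nonempty f), f x := by
  have hsum : 0 ≤ ∑ v, f v := sum_nonneg fun v _ => hf v
  rw [← sup'_div₀ hsum]
  rcases hsum.lt_or_eq with hpos | hzero
  · simp only [div_lt_div_iff_of_pos_right hpos]
  · have hf0 : ∀ x, f x = 0 := fun x =>
      (sum_eq_zero_iff_of_nonneg fun v _ => hf v).mp hzero.symm x (mem_univ x)
    simp only [hf0, sum_const_zero]

end Maximizers

/-- **Tightness criterion for the asymptotic bound.**
`X`, `Y` are random variables on finite alphabets with joint distribution `P`.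
The lower bound `P_{X,Y}{(x,y) : P_{X|Y}(x|y) < max_{u∈𝒳} P_{X|Y}(u|y)}` equals the
minimum probability of error `P_e = 1 - ∑_y max_x P(x,y)` if and only if for every
`y` with `P_Y(y) > 0` the maximizer of `x ↦ P_{X|Y}(x|y)` is unique, where
`P_{X|Y}(x|y) = P(x,y) / ∑_v P(v,y)`. -/
theorem stmt_5 {𝒳 𝒴 : Type*} [Fintype 𝒳] [Fintype 𝒴] [Nonempty 𝒳]
    (P : 𝒳 → 𝒴 → ℝ) (hP : ∀ x y, 0 ≤ P x y)
    (hsum : ∑ x, ∑ y, P x y = 1) :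
    (∑ q ∈ Finset.univ.filter (fun q : 𝒳 × 𝒴 =>
          P q.1 q.2 / ∑ v, P v q.2 <
            Finset.univ.sup' Finset.univ_nonempty fun u => P u q.2 / ∑ v, P v q.2),
        P q.1 q.2)
      = 1 - ∑ y, Finset.univ.sup' Finset.univ_nonempty (fun x => P x y)
    ↔ ∀ y : 𝒴, 0 < ∑ x, P x y →
        ∃! x : 𝒳, ∀ u : 𝒳, P u y / ∑ v, P v y ≤ P x y / ∑ v, P v y := by
  have hPe : 1 - ∑ y, univ.sup' univ_nonempty (fun x => P x y)
      = ∑ y, (∑ x, P x y - univ.sup' univ_nonempty (fun x => P x y)) := by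
    rw [sum_sub_distrib, sum_comm, hsum]
  rw [sum_filter, Fintype.sum_prod_type_right]
  simp only [← sum_filter, sum_filter_div_sum_lt_sup' (hP · _)]
  rw [hPe, sum_eq_sum_iff_of_le fun y _ => sum_filter_lt_sup'_le (hP · y)]
  refine forall_congr' fun y => ?_
  rw [sum_filter_lt_sup'_eq_iff (hP · y), forall_prop_of_true (mem_univ y)]
  refine imp_congr_right fun hpos => ?_
  simp only [div_le_div_iff_of_pos_right hpos]
end

section
/- Let X and Y be random variables on finite alphabets 𝒳 and 𝒴 with joint distribution P_{X,Y}, and suppose P_e < 1. Define γ* = Σ_{y∈𝒴} max_{x∈𝒳} P_{X,Y}(x,y) = 1 − P_e and the output distribution Q*_Y(y) = max_{x∈𝒳} P_{X,Y}(x,y) / γ*. Then Pr[ P_{X,Y}(X,Y)/Q*_Y(Y) ≤ γ* ] − γ* = P_e; i.e., the choice (Q*_Y, γ*) achieves the minimum error probability in the generalized Verdú-Han lower bound. -/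
open scoped Classical BigOperators

/-! The scaled output distribution satisfies `γ* Q*_Y(y) = max_x P(x,y)`, so the event
`P(x,y) ≤ γ* Q*_Y(y)` holds at every point and has probability `1`; hence the bound equals
`1 - γ* = P_e`. -/

theorem le_mul_sup'_div {ι κ : Type*} [Fintype ι] [Nonempty ι] (P : ι → κ → ℝ) {γ : ℝ}
    (hγ : γ ≠ 0) (x : ι) (y : κ) :
    P x y ≤ γ * (Finset.univ.sup' Finset.univ_nonempty (fun x => P x y) / γ) := by
  rw [mul_div_cancel₀ _ hγ]
  exact Finset.le_sup' (fun x => P x y) (Finset.mem_univ x)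

theorem stmt_6_general {𝒳 𝒴 : Type*} [Fintype 𝒳] [Fintype 𝒴] [Nonempty 𝒳]
    (P : 𝒳 → 𝒴 → ℝ)
    (hsum : ∑ x, ∑ y, P x y = 1)
    (hPe : 1 - ∑ y, Finset.univ.sup' Finset.univ_nonempty (fun x => P x y) < 1)
    (γ : ℝ) (hγ : γ = ∑ y, Finset.univ.sup' Finset.univ_nonempty (fun x => P x y))
    (Q : 𝒴 → ℝ)
    (hQ : ∀ y, Q y = (Finset.univ.sup' Finset.univ_nonempty (fun x => P x y)) / γ) :
    (∑ q ∈ Finset.univ.filter (fun q : 𝒳 × 𝒴 => P q.1 q.2 ≤ γ * Q q.2), P q.1 q.2) - γ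
      = 1 - ∑ y, Finset.univ.sup' Finset.univ_nonempty (fun x => P x y) := by
  have hγ_ne : γ ≠ 0 := (show 0 < γ by linarith).ne'
  have h_sure : Finset.univ.filter (fun q : 𝒳 × 𝒴 => P q.1 q.2 ≤ γ * Q q.2) = Finset.univ :=
    Finset.filter_true_of_mem fun q _ => hQ q.2 ▸ le_mul_sup'_div P hγ_ne q.1 q.2
  rw [h_sure, Fintype.sum_prod_type, hsum, hγ]

/-- **The optimizers of the generalized Verdú–Han bound achieve `P_e`.**
`X`, `Y` are random variables on finite alphabets with joint distribution `P`, and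
`P_e = 1 - ∑_y max_x P(x,y) < 1`.  With `γ* = ∑_y max_x P(x,y) = 1 - P_e` and
`Q*_Y(y) = max_x P(x,y) / γ*`, one has
`Pr[P_{X,Y}(X,Y)/Q*_Y(Y) ≤ γ*] - γ* = P_e`, where the probability is that of the set
`{(x,y) : P(x,y) ≤ γ* · Q*_Y(y)}` under `P`. -/
theorem stmt_6 {𝒳 𝒴 : Type*} [Fintype 𝒳] [Fintype 𝒴] [Nonempty 𝒳]
    (P : 𝒳 → 𝒴 → ℝ) (hP : ∀ x y, 0 ≤ P x y)
    (hsum : ∑ x, ∑ y, P x y = 1)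
    (hPe : 1 - ∑ y, Finset.univ.sup' Finset.univ_nonempty (fun x => P x y) < 1)
    (γ : ℝ) (hγ : γ = ∑ y, Finset.univ.sup' Finset.univ_nonempty (fun x => P x y))
    (Q : 𝒴 → ℝ)
    (hQ : ∀ y, Q y = (Finset.univ.sup' Finset.univ_nonempty (fun x => P x y)) / γ) :
    (∑ q ∈ Finset.univ.filter (fun q : 𝒳 × 𝒴 => P q.1 q.2 ≤ γ * Q q.2), P q.1 q.2) - γ
      = 1 - ∑ y, Finset.univ.sup' Finset.univ_nonempty (fun x => P x y) :=
  stmt_6_general P hsum hPe γ hγ Q hQ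
end

section
/- Let X and Y be random variables on finite alphabets 𝒳 and 𝒴 with joint distribution P_{X,Y}. For every distribution Q_Y on 𝒴 and every γ ≥ 0, the minimum probability of error satisfies P_e ≥ Pr[ P_{X,Y}(X,Y)/Q_Y(Y) ≤ γ ] − γ. -/
open scoped Classical BigOperators

/-!
For each `y`, discard the largest mass `max_x P(x,y)` from the column `P(·,y)`. If that entry
lies above the threshold `γ Q(y)`, the set `{x : P(x,y) ≤ γ Q(y)}` avoids it; otherwise the
maximum itself is at most `γ Q(y)`. Either way the column's mass in that set is at most
`∑_x P(x,y) - max_x P(x,y) + γ Q(y)`, and summing over `y` gives `1 - ∑_y max_x P(x,y) + γ`.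
-/

namespace Finset

variable {ι α : Type*} [AddCommGroup α] [LinearOrder α] [IsOrderedAddMonoid α]

theorem sum_filter_le_sum_sub_sup'_add (s : Finset ι) (hs : s.Nonempty) {f : ι → α}
    (hf : ∀ i ∈ s, 0 ≤ f i) {t : α} (ht : 0 ≤ t) :
    ∑ i ∈ s.filter (fun i => f i ≤ t), f i ≤ ∑ i ∈ s, f i - s.sup' hs f + t := by
  obtain ⟨i₀, hi₀, hmax⟩ := s.exists_mem_eq_sup' hs f
  rw [hmax]
  by_cases hi₀t : f i₀ ≤ t
  · calc ∑ i ∈ s.filter (fun i => f i ≤ t), f i ≤ ∑ i ∈ s, f i :=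
          sum_le_sum_of_subset_of_nonneg (filter_subset _ s) fun i hi _ => hf i hi
      _ ≤ ∑ i ∈ s, f i - f i₀ + t := by
        rw [sub_add_eq_add_sub, le_sub_iff_add_le]
        gcongr
  · have hsub : s.filter (fun i => f i ≤ t) ⊆ s.erase i₀ := fun i hi => by
      rw [mem_filter] at hi
      exact mem_erase.2 ⟨fun h => hi₀t (h ▸ hi.2), hi.1⟩
    calc ∑ i ∈ s.filter (fun i => f i ≤ t), f i ≤ ∑ i ∈ s.erase i₀, f i :=
          sum_le_sum_of_subset_of_nonneg hsub fun i hi _ => hf i (mem_of_mem_erase hi)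
      _ = ∑ i ∈ s, f i - f i₀ := eq_sub_of_add_eq (sum_erase_add s f hi₀)
      _ ≤ ∑ i ∈ s, f i - f i₀ + t := le_add_of_nonneg_right ht

end Finset

/-- **Generalized Verdú–Han lower bound.**
`X`, `Y` are random variables on finite alphabets with joint distribution `P`.
For every distribution `Q` on `𝒴` and every `γ ≥ 0`, the minimum probability of error
`P_e = 1 - ∑_y max_x P(x,y)` satisfies
`P_e ≥ Pr[P_{X,Y}(X,Y)/Q(Y) ≤ γ] - γ`, where the probability is that of the set
`{(x,y) : P(x,y) ≤ γ · Q(y)}` under `P`. -/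
theorem stmt_7 {𝒳 𝒴 : Type*} [Fintype 𝒳] [Fintype 𝒴] [Nonempty 𝒳]
    (P : 𝒳 → 𝒴 → ℝ) (hP : ∀ x y, 0 ≤ P x y)
    (hsum : ∑ x, ∑ y, P x y = 1)
    (Q : 𝒴 → ℝ) (hQ0 : ∀ y, 0 ≤ Q y) (hQ1 : ∑ y, Q y = 1)
    (γ : ℝ) (hγ : 0 ≤ γ) :
    1 - ∑ y, Finset.univ.sup' Finset.univ_nonempty (fun x => P x y) ≥
      (∑ q ∈ Finset.univ.filter (fun q : 𝒳 × 𝒴 => P q.1 q.2 ≤ γ * Q q.2), P q.1 q.2) - γ := by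
  have hcolumns : ∑ q ∈ Finset.univ.filter (fun q : 𝒳 × 𝒴 => P q.1 q.2 ≤ γ * Q q.2), P q.1 q.2
      = ∑ y, ∑ x ∈ Finset.univ.filter (fun x => P x y ≤ γ * Q y), P x y := by
    simp only [Finset.sum_filter]
    rw [Fintype.sum_prod_type, Finset.sum_comm]
  have hcolumn_bound := Finset.sum_le_sum fun y (_ : y ∈ Finset.univ) =>
    Finset.univ.sum_filter_le_sum_sub_sup'_add Finset.univ_nonempty (fun x _ => hP x y)
      (mul_nonneg hγ (hQ0 y))
  rw [Finset.sum_add_distrib, Finset.sum_sub_distrib, Finset.sum_comm, hsum, ← Finset.mul_sum,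
    hQ1, mul_one] at hcolumn_bound
  rw [hcolumns]
  linarith
end

section
/- Consider the n-fold memoryless BSC with crossover probability p ∈ (0,1/2), a code 𝒞_n ⊆ {0,1}^n with |𝒞_n| ≥ 2, and X^n uniform on 𝒞_n. Let a_n be the minimum probability of decoding error, b_n = P_{X^n,Y^n}(NT(𝒞_n)) the probability of the strict-tie-breaking set, and δ_n = P_{X^n,Y^n}(T(𝒞_n)) the probability of the set of ties. Then b_n ≤ a_n ≤ b_n + δ_n. -/
open scoped Classical BigOperators

/-- Joint distribution of input and output of the `n`-fold memoryless BSC with crossover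
probability `p`, with input uniform over the code `C ⊆ {0,1}ⁿ`:
`P_{Xⁿ,Yⁿ}(x,y) = 1{x ∈ C} · |C|⁻¹ · p^{d(x,y)} (1-p)^{n - d(x,y)}`. -/
noncomputable def bscJoint (n : ℕ) (p : ℝ) (C : Finset (Fin n → Bool))
    (x y : Fin n → Bool) : ℝ :=
  (if x ∈ C then ((C.card : ℝ))⁻¹ else 0) *
    p ^ hammingDist x y * (1 - p) ^ (n - hammingDist x y)

/-- Minimum distance to `y` from codewords of `C` other than `x`:
`min_{u∈C, u≠x} d(u,y)`. -/
noncomputable def dmin (n : ℕ) (C : Finset (Fin n → Bool)) (x y : Fin n → Bool) : ℕ :=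
  sInf {d : ℕ | ∃ u ∈ C, u ≠ x ∧ d = hammingDist u y}

/-- Minimum probability of decoding error
`aₙ = 1 - ∑_y max_{x∈C} P_{Xⁿ}(x) Wⁿ(y|x)`. -/
noncomputable def aErr (n : ℕ) (p : ℝ) (C : Finset (Fin n → Bool)) (h : C.Nonempty) : ℝ :=
  1 - ∑ y : Fin n → Bool, C.sup' h fun x => bscJoint n p C x y

/-- `bₙ = P_{Xⁿ,Yⁿ}(NT(C))`, probability of the strict-tie-breaking set
`NT(C) = {(x,y) ∈ C × {0,1}ⁿ : d(x,y) > min_{u∈C, u≠x} d(u,y)}`. -/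
noncomputable def bNT (n : ℕ) (p : ℝ) (C : Finset (Fin n → Bool)) : ℝ :=
  ∑ q ∈ Finset.univ.filter (fun q : (Fin n → Bool) × (Fin n → Bool) =>
      q.1 ∈ C ∧ dmin n C q.1 q.2 < hammingDist q.1 q.2),
    bscJoint n p C q.1 q.2

/-- `δₙ = P_{Xⁿ,Yⁿ}(T(C))`, probability of the set of ties
`T(C) = {(x,y) ∈ C × {0,1}ⁿ : d(x,y) = min_{u∈C, u≠x} d(u,y)}`. -/
noncomputable def deltaT (n : ℕ) (p : ℝ) (C : Finset (Fin n → Bool)) : ℝ :=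
  ∑ q ∈ Finset.univ.filter (fun q : (Fin n → Bool) × (Fin n → Bool) =>
      q.1 ∈ C ∧ hammingDist q.1 q.2 = dmin n C q.1 q.2),
    bscJoint n p C q.1 q.2

/-!
For a fixed output `y`, the codewords split into those strictly farther from `y` than some
other codeword (`NT`), the ties (`T`), and the codewords strictly closer than every other one;
at most one codeword is of the last kind. Since `p < 1/2`, the joint probability `P(x, y)`
decreases with `d(x, y)`, so `max_x P(x, y)` is attained at a closest codeword, which is not
in `NT`. Thus `∑_{x ∈ NT_y} P(x, y) ≤ P(y) - max_x P(x, y) ≤ ∑_{x ∈ NT_y ∪ T_y} P(x, y)`,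
and summing over `y` gives `bₙ ≤ aₙ ≤ bₙ + δₙ`.
-/

namespace Finset

variable {α β M : Type*}

theorem sum_filter_lt_add_sum_filter_eq_add_sum_filter_gt [AddCommMonoid M] [LinearOrder β]
    (s : Finset α) (g h : α → β) (f : α → M) :
    ∑ x ∈ s.filter (fun x => h x < g x), f x + ∑ x ∈ s.filter (fun x => g x = h x), f x
      + ∑ x ∈ s.filter (fun x => g x < h x), f x = ∑ x ∈ s, f x := by
  simp only [sum_filter, ← sum_add_distrib]
  refine sum_congr rfl fun x _ => ?_
  rcases lt_trichotomy (g x) (h x) with hx | hx | hx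
  · simp [hx, hx.ne, hx.not_gt]
  · simp [hx]
  · simp [hx, hx.ne', hx.not_gt]

theorem sum_le_sup'_of_card_le_one [AddCommMonoid M] [LinearOrder M] [IsOrderedAddMonoid M]
    {s t : Finset α} (ht : t.Nonempty) (hst : s ⊆ t) (hs : #s ≤ 1) {f : α → M}
    (hf : ∀ x ∈ t, 0 ≤ f x) : ∑ x ∈ s, f x ≤ t.sup' ht f := by
  obtain rfl | ⟨a, ha⟩ := s.eq_empty_or_nonempty
  · obtain ⟨b, hb⟩ := ht
    simpa using le_sup'_of_le f hb (hf b hb)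
  · rw [eq_singleton_iff_unique_mem.mpr ⟨ha, fun b hb => card_le_one.mp hs b hb a ha⟩,
      sum_singleton]
    exact le_sup' f (hst ha)

theorem sum_filter_fst_mem_and [AddCommMonoid M] [Fintype α] [Fintype β] [DecidableEq α]
    (C : Finset α) (R : α → β → Prop) [∀ x y, Decidable (R x y)] (f : α → β → M) :
    ∑ q ∈ univ.filter (fun q : α × β => q.1 ∈ C ∧ R q.1 q.2), f q.1 q.2
      = ∑ y, ∑ x ∈ C.filter (R · y), f x y := by
  rw [sum_filter, Fintype.sum_prod_type, sum_comm]
  simp only [sum_filter, ite_and, sum_ite_mem, univ_inter]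

end Finset

open Finset

section Transition

variable {n : ℕ} {p : ℝ}

theorem pow_mul_one_sub_pow_le_of_le (hp0 : 0 ≤ p) (hp : p ≤ 1 - p) {d₁ d₂ : ℕ}
    (h₁₂ : d₁ ≤ d₂) (h₂ : d₂ ≤ n) :
    p ^ d₂ * (1 - p) ^ (n - d₂) ≤ p ^ d₁ * (1 - p) ^ (n - d₁) :=
  calc p ^ d₂ * (1 - p) ^ (n - d₂)
      = p ^ d₁ * (p ^ (d₂ - d₁) * (1 - p) ^ (n - d₂)) := by
        rw [← mul_assoc, ← pow_add, Nat.add_sub_cancel' h₁₂]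
    _ ≤ p ^ d₁ * ((1 - p) ^ (d₂ - d₁) * (1 - p) ^ (n - d₂)) := by
        have h1p : 0 ≤ 1 - p := hp0.trans hp
        gcongr
    _ = p ^ d₁ * (1 - p) ^ (n - d₁) := by rw [← pow_add]; congr 2; omega

noncomputable def bscTransition (n : ℕ) (p : ℝ) (x y : Fin n → Bool) : ℝ :=
  p ^ hammingDist x y * (1 - p) ^ (n - hammingDist x y)

theorem bscTransition_eq_prod (x y : Fin n → Bool) :
    bscTransition n p x y = ∏ i, if x i = y i then 1 - p else p := by
  have hne : #(univ.filter fun i => ¬ x i = y i) = hammingDist x y := rfl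
  have heq : #(univ.filter fun i => x i = y i) = n - hammingDist x y := by
    have := card_filter_add_card_filter_not (s := univ) (p := fun i => x i = y i)
    simp only [card_univ, Fintype.card_fin] at this
    omega
  rw [prod_ite, prod_const, prod_const, heq, ← hne, mul_comm, bscTransition]
  rfl

theorem sum_bscTransition (x : Fin n → Bool) : ∑ y, bscTransition n p x y = 1 := by
  simp_rw [bscTransition_eq_prod]
  rw [← Fintype.prod_sum fun i (b : Bool) => if x i = b then 1 - p else p]
  refine prod_eq_one fun i _ => ?_
  cases x i <;> simp

theorem bscTransition_nonneg (hp0 : 0 ≤ p) (hp1 : p ≤ 1) (x y : Fin n → Bool) :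
    0 ≤ bscTransition n p x y := by
  have : 0 ≤ 1 - p := by linarith
  unfold bscTransition
  positivity

theorem bscTransition_le_of_hammingDist_le (hp0 : 0 ≤ p) (hp : p ≤ 1 / 2)
    {x x' y : Fin n → Bool} (h : hammingDist x' y ≤ hammingDist x y) :
    bscTransition n p x y ≤ bscTransition n p x' y :=
  pow_mul_one_sub_pow_le_of_le hp0 (by linarith) h
    (by simpa using hammingDist_le_card_fintype (x := x) (y := y))

end Transition

section Joint

variable {n : ℕ} {p : ℝ} {C : Finset (Fin n → Bool)}

theorem bscJoint_eq_ite_mul (x y : Fin n → Bool) :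
    bscJoint n p C x y = (if x ∈ C then ((#C : ℝ))⁻¹ else 0) * bscTransition n p x y :=
  mul_assoc _ _ _

theorem bscJoint_nonneg (hp0 : 0 ≤ p) (hp1 : p ≤ 1) (x y : Fin n → Bool) :
    0 ≤ bscJoint n p C x y := by
  rw [bscJoint_eq_ite_mul]
  exact mul_nonneg (by split_ifs <;> positivity) (bscTransition_nonneg hp0 hp1 x y)

theorem bscJoint_le_of_hammingDist_le (hp0 : 0 ≤ p) (hp : p ≤ 1 / 2)
    {x x' y : Fin n → Bool} (hx : x ∈ C) (hx' : x' ∈ C)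
    (h : hammingDist x' y ≤ hammingDist x y) : bscJoint n p C x y ≤ bscJoint n p C x' y := by
  simp only [bscJoint_eq_ite_mul, if_pos hx, if_pos hx']
  gcongr
  exact bscTransition_le_of_hammingDist_le hp0 hp h

theorem sum_sum_bscJoint (hC : C.Nonempty) : ∑ y, ∑ x ∈ C, bscJoint n p C x y = 1 := by
  rw [sum_comm]
  simp_rw [bscJoint_eq_ite_mul, ← mul_sum, sum_bscTransition, mul_one]
  rw [sum_ite_of_true fun _ hx => hx, sum_const, nsmul_eq_mul,
    mul_inv_cancel₀ (Nat.cast_ne_zero.mpr hC.card_pos.ne')]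

theorem bNT_eq_sum : bNT n p C
    = ∑ y, ∑ x ∈ C.filter (fun x => dmin n C x y < hammingDist x y), bscJoint n p C x y :=
  sum_filter_fst_mem_and C (fun x y => dmin n C x y < hammingDist x y) (bscJoint n p C)

theorem deltaT_eq_sum : deltaT n p C
    = ∑ y, ∑ x ∈ C.filter (fun x => hammingDist x y = dmin n C x y), bscJoint n p C x y :=
  sum_filter_fst_mem_and C (fun x y => hammingDist x y = dmin n C x y) (bscJoint n p C)

theorem aErr_eq_sum (hC : C.Nonempty) : aErr n p C hC
    = ∑ y, (∑ x ∈ C, bscJoint n p C x y - C.sup' hC fun x => bscJoint n p C x y) := by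
  rw [aErr, sum_sub_distrib, sum_sum_bscJoint hC]

end Joint

section MinDistance

variable {n : ℕ} {C : Finset (Fin n → Bool)} {x u y : Fin n → Bool}

theorem dmin_le (hu : u ∈ C) (hux : u ≠ x) : dmin n C x y ≤ hammingDist u y :=
  Nat.sInf_le ⟨u, hu, hux, rfl⟩

theorem exists_dmin_eq (hC : 1 < #C) (x y : Fin n → Bool) :
    ∃ u ∈ C, u ≠ x ∧ dmin n C x y = hammingDist u y := by
  obtain ⟨u, hu, hux⟩ := exists_mem_ne hC x
  exact Nat.sInf_mem (s := {d | ∃ u ∈ C, u ≠ x ∧ d = hammingDist u y})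
    ⟨_, u, hu, hux, rfl⟩

theorem hammingDist_le_dmin_of_forall_le (hC : 1 < #C)
    (h : ∀ u ∈ C, hammingDist x y ≤ hammingDist u y) : hammingDist x y ≤ dmin n C x y := by
  obtain ⟨u, hu, -, hdu⟩ := exists_dmin_eq hC x y
  exact hdu ▸ h u hu

theorem card_filter_hammingDist_lt_dmin_le_one (y : Fin n → Bool) :
    #(C.filter fun x => hammingDist x y < dmin n C x y) ≤ 1 := by
  refine card_le_one.mpr fun x hx x' hx' => ?_
  rw [mem_filter] at hx hx'
  by_contra hne
  have h₁ := dmin_le (y := y) hx'.1 (Ne.symm hne)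
  have h₂ := dmin_le (y := y) hx.1 hne
  omega

end MinDistance

section PerOutput

variable {n : ℕ} {p : ℝ} {C : Finset (Fin n → Bool)}

theorem sum_filter_dmin_lt_le_sum_sub_sup' (hp0 : 0 ≤ p) (hp : p ≤ 1 / 2) (hC : 1 < #C)
    (hne : C.Nonempty) (y : Fin n → Bool) :
    ∑ x ∈ C.filter (fun x => dmin n C x y < hammingDist x y), bscJoint n p C x y
      ≤ ∑ x ∈ C, bscJoint n p C x y - C.sup' hne fun x => bscJoint n p C x y := by
  obtain ⟨x₀, hx₀, hx₀_min⟩ := exists_min_image C (fun x => hammingDist x y) hne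
  have hsup : (C.sup' hne fun x => bscJoint n p C x y) = bscJoint n p C x₀ y :=
    le_antisymm (sup'_le _ _ fun x hx => bscJoint_le_of_hammingDist_le hp0 hp hx hx₀
      (hx₀_min x hx)) (le_sup' (fun x => bscJoint n p C x y) hx₀)
  have hx₀_notNT : x₀ ∈ C.filter (fun x => ¬ dmin n C x y < hammingDist x y) :=
    mem_filter.mpr ⟨hx₀, not_lt.mpr (hammingDist_le_dmin_of_forall_le hC hx₀_min)⟩
  have := single_le_sum (f := fun x => bscJoint n p C x y)
    (fun x _ => bscJoint_nonneg hp0 (by linarith) x y) hx₀_notNT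
  rw [hsup, ← sum_filter_add_sum_filter_not C fun x => dmin n C x y < hammingDist x y]
  linarith

theorem sum_sub_sup'_le_sum_filter_add_sum_filter (hp0 : 0 ≤ p) (hp1 : p ≤ 1)
    (hne : C.Nonempty) (y : Fin n → Bool) :
    ∑ x ∈ C, bscJoint n p C x y - (C.sup' hne fun x => bscJoint n p C x y)
      ≤ ∑ x ∈ C.filter (fun x => dmin n C x y < hammingDist x y), bscJoint n p C x y
        + ∑ x ∈ C.filter (fun x => hammingDist x y = dmin n C x y), bscJoint n p C x y := by
  have hunique := sum_le_sup'_of_card_le_one hne (filter_subset _ C)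
    (card_filter_hammingDist_lt_dmin_le_one y)
    (fun x _ => bscJoint_nonneg (C := C) hp0 hp1 x y)
  rw [← sum_filter_lt_add_sum_filter_eq_add_sum_filter_gt C (fun x => hammingDist x y)
    (fun x => dmin n C x y)]
  linarith

end PerOutput

/-- **Sandwich bound `bₙ ≤ aₙ ≤ bₙ + δₙ`** for the `n`-fold BSC with crossover
probability `p ∈ (0,1/2)`, a code `C` with `|C| ≥ 2` and uniform input on `C`. -/
theorem stmt_9 (n : ℕ) (p : ℝ) (hp0 : 0 < p) (hp2 : p < 1 / 2)
    (C : Finset (Fin n → Bool)) (hC : 2 ≤ C.card) :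
    bNT n p C ≤ aErr n p C (Finset.card_pos.mp (by omega)) ∧
      aErr n p C (Finset.card_pos.mp (by omega)) ≤ bNT n p C + deltaT n p C := by
  rw [aErr_eq_sum, bNT_eq_sum, deltaT_eq_sum, ← sum_add_distrib]
  exact ⟨sum_le_sum fun y _ => sum_filter_dmin_lt_le_sum_sub_sup' hp0.le hp2.le hC _ y,
    sum_le_sum fun y _ => sum_sub_sup'_le_sum_filter_add_sum_filter hp0.le (by linarith) _ y⟩
end

section
/- Consider the n-fold memoryless BSC with crossover probability p ∈ (0,1/2), input x ∈ {0,1}^n, and another word x' ∈ {0,1}^n. If d(x,x') = 2ℓ with ℓ ≥ 1, then Pr( d(x,Y^n) = d(x',Y^n) | X^n = x ) = C(2ℓ, ℓ) p^ℓ (1−p)^ℓ; if d(x,x') is odd, this probability is 0. -/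
open scoped Classical BigOperators

/-- Transition probability of the `n`-fold memoryless BSC with crossover probability `p`:
`Wⁿ(y|x) = p^{d(x,y)} (1-p)^{n - d(x,y)}`. -/
noncomputable def bscW (n : ℕ) (p : ℝ) (x y : Fin n → Bool) : ℝ :=
  p ^ hammingDist x y * (1 - p) ^ (n - hammingDist x y)

/-!
Encode a received word `y` by the set `T` of positions where it differs from the input `x`,
so that `d(x, y) = #T`. With `D` the set where `x` and `x'` differ,
`d(x', y) + 2 #(D ∩ T) = #D + #T`, so a tie `d(x, y) = d(x', y)` means exactly
`#D = 2 #(D ∩ T)`, which is impossible for odd `#D`. For `#D = 2ℓ`, splitting `T` into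
`T ∩ D`, which must have `ℓ` elements, and the unconstrained part `T \ D` gives
`C(2ℓ, ℓ) pˡ (1-p)ˡ (p + (1-p))^(n-2ℓ)`.
-/

open Finset

namespace BSCTie

variable {α : Type*} [Fintype α]

def flipEquiv [DecidableEq α] (x : α → Bool) : Finset α ≃ (α → Bool) where
  toFun T i := if i ∈ T then !x i else x i
  invFun y := {i | x i ≠ y i}
  left_inv T := by ext i; by_cases h : i ∈ T <;> simp [h]
  right_inv y := by funext i; cases hx : x i <;> cases hy : y i <;> simp [hx, hy]

lemma flipEquiv_symm_apply [DecidableEq α] (x y : α → Bool) :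
    (flipEquiv x).symm y = ({i | x i ≠ y i} : Finset α) := rfl

lemma hammingDist_add_two_mul_card_filter_and (x x' y : α → Bool) :
    hammingDist x' y + 2 * #{i | x i ≠ x' i ∧ x i ≠ y i}
      = hammingDist x x' + hammingDist x y := by
  simp only [hammingDist, card_filter, mul_sum, ← sum_add_distrib]
  refine sum_congr rfl fun i _ => ?_
  cases x i <;> cases x' i <;> cases y i <;> simp

lemma hammingDist_eq_hammingDist_iff (x x' y : α → Bool) :
    hammingDist x y = hammingDist x' y
      ↔ hammingDist x x' = 2 * #{i | x i ≠ x' i ∧ x i ≠ y i} := by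
  have := hammingDist_add_two_mul_card_filter_and x x' y
  omega

lemma even_hammingDist_of_hammingDist_eq {x x' y : α → Bool}
    (h : hammingDist x y = hammingDist x' y) : Even (hammingDist x x') :=
  ⟨_, ((hammingDist_eq_hammingDist_iff x x' y).1 h).trans (two_mul _)⟩

section Split

variable [DecidableEq α] {A B D : Finset α}

lemma inter_union_of_subset_of_subset_compl (hA : A ⊆ D) (hB : B ⊆ Dᶜ) :
    D ∩ (A ∪ B) = A := by
  ext i
  grind [mem_compl]

lemma union_sdiff_of_subset_of_subset_compl (hA : A ⊆ D) (hB : B ⊆ Dᶜ) :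
    (A ∪ B) \ D = B := by
  ext i
  grind [mem_compl]

lemma sum_eq_sum_powerset_sum_powerset_compl {β : Type*} [AddCommMonoid β] (D : Finset α)
    (f : Finset α → β) :
    ∑ T : Finset α, f T = ∑ A ∈ D.powerset, ∑ B ∈ Dᶜ.powerset, f (A ∪ B) := by
  have hrecombine (T : Finset α) : D ∩ T ∪ T \ D = T := by
    rw [inter_comm, union_comm, sdiff_union_inter]
  rw [← sum_product']
  refine sum_nbij' (fun T => (D ∩ T, T \ D)) (fun q => q.1 ∪ q.2) ?_ (by simp)
    (fun T _ => hrecombine T) ?_ (fun T _ => by rw [hrecombine])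
  · intro T _
    simp only [mem_product, mem_powerset]
    exact ⟨inter_subset_left, fun i hi => by simp_all⟩
  · rintro ⟨A, B⟩ hAB
    simp only [mem_product, mem_powerset] at hAB
    rw [inter_union_of_subset_of_subset_compl hAB.1 hAB.2,
      union_sdiff_of_subset_of_subset_compl hAB.1 hAB.2]

lemma pow_card_union_mul_pow {R : Type*} [CommSemiring R] (a b : R) (hA : A ⊆ D)
    (hB : B ⊆ Dᶜ) :
    a ^ #(A ∪ B) * b ^ (Fintype.card α - #(A ∪ B))
      = a ^ #A * b ^ (#D - #A) * (a ^ #B * b ^ (#Dᶜ - #B)) := by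
  have hAD := card_le_card hA
  have hBD := card_le_card hB
  have hDc := card_compl D
  have hD := card_le_univ D
  have hAB : Disjoint A B := (disjoint_of_subset_right hA (le_compl_iff_disjoint_right.1 hB)).symm
  rw [card_union_of_disjoint hAB,
    show Fintype.card α - (#A + #B) = (#D - #A) + (#Dᶜ - #B) by omega, pow_add, pow_add]
  ring

theorem sum_filter_card_inter_eq {R : Type*} [CommSemiring R] (D : Finset α)
    (k : ℕ) (a b : R) :
    ∑ T : Finset α with #(D ∩ T) = k, a ^ #T * b ^ (Fintype.card α - #T)
      = (#D).choose k * a ^ k * b ^ (#D - k) * (a + b) ^ (Fintype.card α - #D) := by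
  calc ∑ T : Finset α with #(D ∩ T) = k, a ^ #T * b ^ (Fintype.card α - #T)
      = ∑ A ∈ D.powerset with #A = k,
          a ^ #A * b ^ (#D - #A) * ∑ B ∈ Dᶜ.powerset, a ^ #B * b ^ (#Dᶜ - #B) := by
        rw [sum_filter, sum_eq_sum_powerset_sum_powerset_compl D, sum_filter]
        refine sum_congr rfl fun A hA => ?_
        rw [mem_powerset] at hA
        calc _ = ∑ B ∈ Dᶜ.powerset,
                if #A = k then a ^ #A * b ^ (#D - #A) * (a ^ #B * b ^ (#Dᶜ - #B)) else 0 := by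
              refine sum_congr rfl fun B hB => ?_
              rw [mem_powerset] at hB
              rw [inter_union_of_subset_of_subset_compl hA hB, pow_card_union_mul_pow a b hA hB]
          _ = _ := by split_ifs <;> simp only [mul_sum, sum_const_zero]
    _ = _ := by
        rw [← powersetCard_eq_filter, sum_pow_mul_eq_add_pow, card_compl,
          sum_congr rfl fun A hA => by rw [(mem_powersetCard.1 hA).2], sum_const,
          card_powersetCard, nsmul_eq_mul]
        ring

end Split

end BSCTie

open BSCTie in
theorem stmt_11_general (n : ℕ) (p : ℝ)
    (x x' : Fin n → Bool) (ℓ : ℕ)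
    (hd : hammingDist x x' = 2 * ℓ) :
    (∑ y ∈ Finset.univ.filter (fun y : Fin n → Bool =>
        hammingDist x y = hammingDist x' y), bscW n p x y)
      = (Nat.choose (2 * ℓ) ℓ : ℝ) * p ^ ℓ * (1 - p) ^ ℓ ∧
    ∀ z z' : Fin n → Bool, Odd (hammingDist z z') →
      (∑ y ∈ Finset.univ.filter (fun y : Fin n → Bool =>
          hammingDist z y = hammingDist z' y), bscW n p z y) = 0 := by
  refine ⟨?_, fun z z' hodd => sum_eq_zero fun y hy => ?_⟩
  · set D : Finset (Fin n) := {i | x i ≠ x' i}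
    have hD : #D = 2 * ℓ := hd
    calc _ = ∑ T : Finset (Fin n) with #(D ∩ T) = ℓ,
            p ^ #T * (1 - p) ^ (Fintype.card (Fin n) - #T) := by
          refine sum_equiv (flipEquiv x).symm (fun y => ?_) (fun y _ => ?_)
          · rw [mem_filter, mem_filter, hammingDist_eq_hammingDist_iff, hd, flipEquiv_symm_apply,
              ← filter_and]
            simp only [mem_univ, true_and]
            omega
          · rw [Fintype.card_fin]
            rfl
      _ = _ := by
          rw [sum_filter_card_inter_eq, Fintype.card_fin, add_sub_cancel, one_pow, mul_one,
            hD, two_mul, Nat.add_sub_cancel]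
  · exact absurd (even_hammingDist_of_hammingDist_eq (mem_filter.1 hy).2)
      (Nat.not_even_iff_odd.2 hodd)

/-- **Probability of a tie between two words over the BSC.**
For the `n`-fold BSC with crossover probability `p ∈ (0,1/2)` and input `x`:
if `d(x,x') = 2ℓ` with `ℓ ≥ 1`, then
`Pr(d(x,Yⁿ) = d(x',Yⁿ) | Xⁿ = x) = C(2ℓ,ℓ) pˡ (1-p)ˡ`; and whenever the distance
between two words is odd, the corresponding probability is `0`. -/
theorem stmt_11 (n : ℕ) (p : ℝ) (hp0 : 0 < p) (hp2 : p < 1 / 2)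
    (x x' : Fin n → Bool) (ℓ : ℕ) (hℓ : 1 ≤ ℓ)
    (hd : hammingDist x x' = 2 * ℓ) :
    (∑ y ∈ Finset.univ.filter (fun y : Fin n → Bool =>
        hammingDist x y = hammingDist x' y), bscW n p x y)
      = (Nat.choose (2 * ℓ) ℓ : ℝ) * p ^ ℓ * (1 - p) ^ ℓ ∧
    ∀ z z' : Fin n → Bool, Odd (hammingDist z z') →
      (∑ y ∈ Finset.univ.filter (fun y : Fin n → Bool =>
          hammingDist z y = hammingDist z' y), bscW n p z y) = 0 :=
  stmt_11_general n p x x' ℓ hd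
end

section
/- Let x, x' ∈ {0,1}^n with d(x,x') = 2ℓ for some ℓ ≥ 1, and let 0 ≤ m ≤ n − 2ℓ. Then the number of y ∈ {0,1}^n satisfying d(x,y) = ℓ + 1 + m and d(x,y) > d(x',y) equals Σ_{ℓ'=0}^{min{m, ℓ−1}} C(2ℓ, ℓ+ℓ'+1)·C(n−2ℓ, m−ℓ'). -/
open scoped Classical BigOperators

/-!
Centred at `x`, the cube `{0,1}ⁿ` is the power set of the coordinates: `y` corresponds to the
set `S` of coordinates where it differs from `x`, and Hamming distance becomes the size of the
symmetric difference. With `D` the set for `x'` (so `|D| = 2ℓ`), `d(x', y) = |D| + |S| - 2|D ∩ S|`,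
hence `d(x', y) < d(x, y)` iff `|D ∩ S| > ℓ`. Sorting the admissible `S` by `|D ∩ S| = ℓ + 1 + ℓ'`
and `|S \ D| = m - ℓ'` gives the sum.
-/

open Finset
open scoped symmDiff

namespace Finset

variable {α : Type*} [DecidableEq α]

lemma card_symmDiff_add_two_mul_card_inter (s t : Finset α) :
    #(s ∆ t) + 2 * #(s ∩ t) = #s + #t := by
  have hs := card_sdiff_add_card_inter s t
  have ht := card_sdiff_add_card_inter t s
  rw [inter_comm] at ht
  rw [symmDiff_def, sup_eq_union, card_union_of_disjoint disjoint_sdiff_sdiff]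
  omega

variable [Fintype α]

lemma card_filter_card_inter_card_compl_inter (D : Finset α) (a b : ℕ) :
    #{S : Finset α | #(D ∩ S) = a ∧ #(Dᶜ ∩ S) = b} = (#D).choose a * (#Dᶜ).choose b := by
  have split_union {A B : Finset α} (hA : A ⊆ D) (hB : B ⊆ Dᶜ) :
      D ∩ (A ∪ B) = A ∧ Dᶜ ∩ (A ∪ B) = B := by
    constructor <;> ext i <;> have := @hA i <;> have := @hB i <;>
      simp only [mem_inter, mem_union, mem_compl] at * <;> tauto
  rw [← card_powersetCard, ← card_powersetCard, ← card_product]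
  refine card_nbij' (fun S => (D ∩ S, Dᶜ ∩ S)) (fun p => p.1 ∪ p.2) ?_ ?_ ?_ ?_
  · intro S hS
    simp only [coe_filter, mem_univ, true_and, Set.mem_ofPred_eq] at hS
    simp [mem_powersetCard, hS, inter_subset_left]
  · rintro ⟨A, B⟩ hAB
    simp only [coe_product, Set.mem_prod, mem_coe, mem_powersetCard] at hAB
    obtain ⟨⟨hAD, rfl⟩, hBD, rfl⟩ := hAB
    simp [split_union hAD hBD]
  · intro S _
    simp [← union_inter_distrib_right]
  · rintro ⟨A, B⟩ hAB
    simp only [coe_product, Set.mem_prod, mem_coe, mem_powersetCard] at hAB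
    exact Prod.ext_iff.2 (split_union hAB.1.1 hAB.2.1)

lemma card_inter_add_card_compl_inter (D S : Finset α) : #(D ∩ S) + #(Dᶜ ∩ S) = #S := by
  rw [← card_union_of_disjoint (disjoint_compl_right.mono inter_subset_left inter_subset_left),
    ← union_inter_distrib_right, union_compl, univ_inter]

lemma card_filter_card_eq_lt_card_inter (D : Finset α) (ℓ m : ℕ) (hD : #D = 2 * ℓ) :
    #{S : Finset α | #S = ℓ + 1 + m ∧ ℓ < #(D ∩ S)}
      = ∑ k ∈ range (min m (ℓ - 1) + 1), (2 * ℓ).choose (ℓ + k + 1) * (#Dᶜ).choose (m - k) := by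
  rw [card_eq_sum_card_fiberwise (f := fun S => #(D ∩ S) - (ℓ + 1))]
  · refine sum_congr rfl fun k hk => ?_
    rw [← hD, ← card_filter_card_inter_card_compl_inter, filter_filter]
    congr 1
    refine filter_congr fun S _ => ?_
    have := card_inter_add_card_compl_inter D S
    have := card_le_card (inter_subset_left : D ∩ S ⊆ D)
    rw [mem_range] at hk
    omega
  · intro S hS
    have := card_inter_add_card_compl_inter D S
    have := card_le_card (inter_subset_left : D ∩ S ⊆ D)
    simp only [coe_filter, mem_univ, true_and, Set.mem_ofPred_eq] at hS
    simp only [coe_range, Set.mem_Iio]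
    omega

end Finset

section Hamming

variable {ι : Type*} [Fintype ι] [DecidableEq ι]

def hammingDiffEquiv (x : ι → Bool) : (ι → Bool) ≃ Finset ι where
  toFun y := {i | x i ≠ y i}
  invFun S i := if i ∈ S then !x i else x i
  left_inv y := by
    funext i
    simp only [mem_filter, mem_univ, true_and]
    cases x i <;> cases y i <;> decide
  right_inv S := by ext i; by_cases h : i ∈ S <;> simp [h]

lemma hammingDist_eq_card_hammingDiffEquiv (x y : ι → Bool) :
    hammingDist x y = #(hammingDiffEquiv x y) :=
  rfl

lemma hammingDist_eq_card_symmDiff_hammingDiffEquiv (x y z : ι → Bool) :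
    hammingDist y z = #(hammingDiffEquiv x y ∆ hammingDiffEquiv x z) := by
  unfold hammingDist
  congr 1
  ext i
  simp only [hammingDiffEquiv, Equiv.coe_fn_mk, mem_filter, mem_univ, true_and, mem_symmDiff]
  cases x i <;> cases y i <;> cases z i <;> simp

end Hamming

theorem stmt_12_general (n ℓ m : ℕ)
    (x x' : Fin n → Bool) (hd : hammingDist x x' = 2 * ℓ) :
    (Finset.univ.filter (fun y : Fin n → Bool =>
        hammingDist x y = ℓ + 1 + m ∧ hammingDist x' y < hammingDist x y)).card
      = ∑ ℓ' ∈ Finset.range (min m (ℓ - 1) + 1),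
          Nat.choose (2 * ℓ) (ℓ + ℓ' + 1) * Nat.choose (n - 2 * ℓ) (m - ℓ') := by
  set e := hammingDiffEquiv x with he
  have hD : #(e x') = 2 * ℓ := hd
  have hDc : #(e x')ᶜ = n - 2 * ℓ := by rw [card_compl, hD, Fintype.card_fin]
  rw [← hDc, ← card_filter_card_eq_lt_card_inter (e x') ℓ m hD]
  refine card_equiv e fun y => ?_
  have := card_symmDiff_add_two_mul_card_inter (e x') (e y)
  simp only [mem_filter, mem_univ, true_and, hammingDist_eq_card_hammingDiffEquiv x y,
    hammingDist_eq_card_symmDiff_hammingDiffEquiv x x' y, ← he]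
  omega

/-- **Counting words strictly closer to `x'` (even-distance case).**
If `x, x' ∈ {0,1}ⁿ` have Hamming distance `d(x,x') = 2ℓ` with `ℓ ≥ 1`, then for every
`0 ≤ m ≤ n - 2ℓ` the number of `y ∈ {0,1}ⁿ` with `d(x,y) = ℓ + 1 + m` and
`d(x,y) > d(x',y)` equals
`∑_{ℓ'=0}^{min(m,ℓ-1)} C(2ℓ, ℓ+ℓ'+1)·C(n-2ℓ, m-ℓ')`. -/
theorem stmt_12 (n ℓ m : ℕ) (hℓ : 1 ≤ ℓ)
    (x x' : Fin n → Bool) (hd : hammingDist x x' = 2 * ℓ)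
    (hm : m ≤ n - 2 * ℓ) :
    (Finset.univ.filter (fun y : Fin n → Bool =>
        hammingDist x y = ℓ + 1 + m ∧ hammingDist x' y < hammingDist x y)).card
      = ∑ ℓ' ∈ Finset.range (min m (ℓ - 1) + 1),
          Nat.choose (2 * ℓ) (ℓ + ℓ' + 1) * Nat.choose (n - 2 * ℓ) (m - ℓ') :=
  stmt_12_general n ℓ m x x' hd
end

section
/- Consider the n-fold memoryless BSC with crossover probability p ∈ (0,1/2) and distinct words x, x' ∈ {0,1}^n. Then Pr( d(x,Y^n) > d(x',Y^n) | X^n = x ) ≥ (p / (2(1−p))) · Pr( d(x,Y^n) = d(x',Y^n) | X^n = x ). -/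
/-
Fix a coordinate `i` where `x` and `x'` differ. Complementing `y` on all coordinates where `x` and
`x'` differ exchanges `d(x, ·)` and `d(x', ·)`; on ties it therefore preserves the likelihood
`Wⁿ(y|x)`, and it exchanges the ties with `yᵢ = xᵢ` and those with `yᵢ = x'ᵢ`. So the ties with
`yᵢ = xᵢ` carry exactly half of the tie probability. Flipping coordinate `i` of such a tie moves
`y` one step away from `x` and one step towards `x'`, giving an injection into the outcomes
closer to `x'` that multiplies the likelihood by `p / (1 - p)`.
-/

open scoped Classical BigOperators

open Function Finset

section Hamming

variable {ι : Type*}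

lemma hammingDist_update_add [Fintype ι] [DecidableEq ι] (z w : ι → Bool) (i : ι) (b : Bool) :
    hammingDist z (update w i b) + (if z i ≠ w i then 1 else 0)
      = hammingDist z w + (if z i ≠ b then 1 else 0) := by
  simp only [hammingDist, card_filter]
  rw [← add_sum_erase _ _ (mem_univ i), ← add_sum_erase _ _ (mem_univ i), update_self]
  have hrest : ∑ j ∈ univ.erase i, (if z j ≠ update w i b j then 1 else 0)
      = ∑ j ∈ univ.erase i, (if z j ≠ w j then 1 else 0) :=
    sum_congr rfl fun j hj => by rw [update_of_ne (ne_of_mem_erase hj)]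
  rw [hrest]
  omega

lemma hammingDist_update_not_of_eq [Fintype ι] [DecidableEq ι] {z w : ι → Bool} {i : ι}
    (h : z i = w i) : hammingDist z (update w i (!w i)) = hammingDist z w + 1 := by
  simpa [h] using hammingDist_update_add z w i (!w i)

lemma hammingDist_update_not_of_ne [Fintype ι] [DecidableEq ι] {z w : ι → Bool} {i : ι}
    (h : z i ≠ w i) : hammingDist z (update w i (!w i)) + 1 = hammingDist z w := by
  simpa [h, Bool.eq_not.mpr h] using hammingDist_update_add z w i (!w i)

lemma update_not_involutive [DecidableEq ι] (i : ι) :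
    Involutive fun y : ι → Bool => update y i (!y i) := by
  intro y
  simp

def flipDiff (x x' y : ι → Bool) : ι → Bool := fun j => xor (y j) (xor (x j) (x' j))

lemma flipDiff_involutive (x x' : ι → Bool) : Involutive (flipDiff x x') := by
  intro y
  funext j
  simp [flipDiff]

lemma flipDiff_left (x x' : ι → Bool) : flipDiff x x' x = x' := by
  funext j
  simp [flipDiff]

lemma flipDiff_right (x x' : ι → Bool) : flipDiff x x' x' = x := by
  funext j
  simp only [flipDiff]
  cases x j <;> cases x' j <;> rfl

lemma flipDiff_apply_of_ne {x x' : ι → Bool} (y : ι → Bool) {i : ι} (hi : x i ≠ x' i) :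
    flipDiff x x' y i = !y i := by
  revert hi
  simp only [flipDiff]
  cases x i <;> cases x' i <;> simp

lemma hammingDist_flipDiff [Fintype ι] (x x' y z : ι → Bool) :
    hammingDist (flipDiff x x' y) (flipDiff x x' z) = hammingDist y z :=
  hammingDist_comp (fun j b => xor b (xor (x j) (x' j))) fun j => by
    intro a b h
    simpa using congrArg (xor · (xor (x j) (x' j))) h

lemma hammingDist_flipDiff_left [Fintype ι] (x x' y : ι → Bool) :
    hammingDist x (flipDiff x x' y) = hammingDist x' y := by
  rw [← hammingDist_flipDiff x x' x' y, flipDiff_right]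

lemma hammingDist_flipDiff_right [Fintype ι] (x x' y : ι → Bool) :
    hammingDist x' (flipDiff x x' y) = hammingDist x y := by
  rw [← hammingDist_flipDiff x x' x y, flipDiff_left]

lemma sum_tie_eq_two_nsmul_sum_tie_agree [Fintype ι] [DecidableEq ι] {M : Type*} [AddCommMonoid M]
    (f : ℕ → M) {x x' : ι → Bool} {i : ι} (hi : x i ≠ x' i) :
    ∑ y ∈ {y | hammingDist x y = hammingDist x' y}, f (hammingDist x y)
      = 2 • ∑ y ∈ {y | hammingDist x y = hammingDist x' y ∧ y i = x i}, f (hammingDist x y) := by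
  rw [← sum_filter_add_sum_filter_not _ (fun y => y i = x i), filter_filter, filter_filter,
    two_nsmul]
  congr 1
  refine sum_nbij' (flipDiff x x') (flipDiff x x') ?_ ?_
    (fun y _ => flipDiff_involutive x x' y) (fun y _ => flipDiff_involutive x x' y) ?_
  · intro y hy
    simp only [mem_filter, mem_univ, true_and] at hy ⊢
    rw [hammingDist_flipDiff_left, hammingDist_flipDiff_right, flipDiff_apply_of_ne y hi,
      Bool.not_eq_iff]
    exact ⟨hy.1.symm, hy.2⟩
  · intro y hy
    simp only [mem_filter, mem_univ, true_and] at hy ⊢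
    rw [hammingDist_flipDiff_left, hammingDist_flipDiff_right, flipDiff_apply_of_ne y hi, hy.2]
    exact ⟨hy.1.symm, Bool.not_ne_self _⟩
  · intro y hy
    rw [hammingDist_flipDiff_left, (mem_filter.mp hy).2.1]

end Hamming

section BSC

variable {n : ℕ} {p : ℝ}

lemma bscW_nonneg (hp0 : 0 ≤ p) (hp1 : p ≤ 1) (x y : Fin n → Bool) : 0 ≤ bscW n p x y :=
  mul_nonneg (pow_nonneg hp0 _) (pow_nonneg (sub_nonneg.mpr hp1) _)

lemma bscW_mul_of_hammingDist_eq_succ {x y y' : Fin n → Bool}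
    (h : hammingDist x y' = hammingDist x y + 1) :
    (1 - p) * bscW n p x y' = p * bscW n p x y := by
  have hle : hammingDist x y' ≤ n := by simpa using hammingDist_le_card_fintype (x := x) (y := y')
  obtain ⟨m, hm⟩ : ∃ m, n - hammingDist x y = m + 1 := ⟨n - hammingDist x y', by omega⟩
  rw [bscW, bscW, h, hm, show n - (hammingDist x y + 1) = m by omega, pow_succ, pow_succ]
  ring

lemma mul_sum_tie_agree_le (hp0 : 0 ≤ p) (hp1 : p ≤ 1) {x x' : Fin n → Bool} {i : Fin n}
    (hi : x i ≠ x' i) :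
    p * ∑ y ∈ {y | hammingDist x y = hammingDist x' y ∧ y i = x i}, bscW n p x y
      ≤ (1 - p) * ∑ y ∈ {y | hammingDist x' y < hammingDist x y}, bscW n p x y := by
  set flipAt : (Fin n → Bool) → Fin n → Bool := fun y => update y i (!y i)
  set ties := ({y | hammingDist x y = hammingDist x' y ∧ y i = x i} : Finset (Fin n → Bool))
  have hflip_mem : ∀ y ∈ ties, hammingDist x' (flipAt y) < hammingDist x (flipAt y) := by
    intro y hy
    obtain ⟨htie, hyi⟩ := (mem_filter.mp hy).2
    have hx := hammingDist_update_not_of_eq hyi.symm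
    have hx' := hammingDist_update_not_of_ne (hyi ▸ hi.symm)
    show hammingDist x' (update y i (!y i)) < hammingDist x (update y i (!y i))
    omega
  calc p * ∑ y ∈ ties, bscW n p x y
      = (1 - p) * ∑ y ∈ ties, bscW n p x (flipAt y) := by
        rw [mul_sum, mul_sum]
        exact sum_congr rfl fun y hy => (bscW_mul_of_hammingDist_eq_succ
          (hammingDist_update_not_of_eq (mem_filter.mp hy).2.2.symm)).symm
    _ = (1 - p) * ∑ y ∈ ties.image flipAt, bscW n p x y := by
        rw [sum_image ((update_not_involutive i).injective.injOn)]
    _ ≤ (1 - p) * ∑ y ∈ {y | hammingDist x' y < hammingDist x y}, bscW n p x y := by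
        refine mul_le_mul_of_nonneg_left (sum_le_sum_of_subset_of_nonneg ?_ ?_) (by linarith)
        · intro y hy
          obtain ⟨z, hz, rfl⟩ := mem_image.mp hy
          simpa using hflip_mem z hz
        · exact fun y _ _ => bscW_nonneg hp0 hp1 x y

end BSC

/-- **Strict-inequality probability dominates tie probability up to `p/(2(1-p))`.**
For the `n`-fold BSC with crossover probability `p ∈ (0,1/2)` and distinct words
`x ≠ x'`:
`Pr(d(x,Yⁿ) > d(x',Yⁿ) | Xⁿ = x) ≥ (p/(2(1-p))) · Pr(d(x,Yⁿ) = d(x',Yⁿ) | Xⁿ = x)`. -/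
theorem stmt_14 (n : ℕ) (p : ℝ) (hp0 : 0 < p) (hp2 : p < 1 / 2)
    (x x' : Fin n → Bool) (hxx : x ≠ x') :
    (∑ y ∈ Finset.univ.filter (fun y : Fin n → Bool =>
        hammingDist x' y < hammingDist x y), bscW n p x y)
      ≥ (p / (2 * (1 - p))) *
        ∑ y ∈ Finset.univ.filter (fun y : Fin n → Bool =>
          hammingDist x y = hammingDist x' y), bscW n p x y := by
  obtain ⟨i, hi⟩ := Function.ne_iff.mp hxx
  have hhalf : ∑ y ∈ {y | hammingDist x y = hammingDist x' y}, bscW n p x y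
      = 2 • ∑ y ∈ {y | hammingDist x y = hammingDist x' y ∧ y i = x i}, bscW n p x y :=
    sum_tie_eq_two_nsmul_sum_tie_agree (fun d => p ^ d * (1 - p) ^ (n - d)) hi
  have hflip := mul_sum_tie_agree_le hp0.le (by linarith) hi
  rw [ge_iff_le, div_mul_eq_mul_div, div_le_iff₀ (by linarith), hhalf, two_nsmul]
  linarith
end
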